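/- Let p be a prime, let k ≥ 1 and m ≥ r ≥ 0 be integers, and let B₁ ∈ M_r(ℤ_p) be arbitrary. Let T = 1_{m−r} ⊕ p·B₁ ∈ M_m(ℤ_p) (block diagonal). Then lim_{a→∞} p^{−a(4km−m²)} · #{(X, Y) ∈ (M_{2k,m}(ℤ/p^aℤ))² : XᵀY = T mod p^a, and both X mod p and Y mod p have rank m} = ∏_{i=0}^{m+r−1} (1 − p^{i−2k}). -/

import Mathlib

open Matrix Filter Topology Module

section Aux

/-! ### Generic counting lemmas -/

lemma nat_card_sigma {ι : Type*} [Fintype ι] (g : ι → Type*) [∀ i, Finite (g i)] :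
    Nat.card (Σ i, g i) = ∑ i, Nat.card (g i) := by
  letI := fun i => Fintype.ofFinite (g i)
  simp [Nat.card_eq_fintype_card]

lemma card_comp_eq {A B : Type*} [Finite A] [Finite B] (f : A → B) (P : B → Prop) (t : ℕ)
    (hf : ∀ b : B, Nat.card {a : A // f a = b} = t) :
    Nat.card {a : A // P (f a)} = t * Nat.card {b : B // P b} := by
  classical
  have e := Equiv.sigmaSubtypeFiberEquivSubtype f (p := fun a => P (f a)) (q := P)
    (fun a => Iff.rfl)
  haveI : Finite {b : B // P b} := Subtype.finite
  letI : Fintype {b : B // P b} := Fintype.ofFinite _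
  rw [← Nat.card_congr e, nat_card_sigma]
  simp only [hf, Finset.sum_const, Finset.card_univ, smul_eq_mul,
    Nat.card_eq_fintype_card, mul_comm]

variable {p : ℕ} [hp : Fact p.Prime]

lemma card_zmod_fiber (c : ℕ) (h : p ∣ p ^ (c + 1)) (y : ZMod p) :
    Nat.card {x : ZMod (p ^ (c + 1)) // ZMod.castHom h (ZMod p) x = y} = p ^ c := by
  haveI : NeZero p := ⟨hp.out.ne_zero⟩
  haveI : NeZero (p ^ (c + 1)) := ⟨pow_ne_zero _ hp.out.ne_zero⟩
  set φ := ZMod.castHom h (ZMod p) with hφ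
  have hpre : ∀ y : ZMod p, φ ((y.val : ZMod (p ^ (c + 1)))) = y := by
    intro y
    rw [map_natCast]
    exact ZMod.natCast_rightInverse y
  have htrans : ∀ y : ZMod p,
      Nat.card {x : ZMod (p ^ (c + 1)) // φ x = y} =
        Nat.card {x : ZMod (p ^ (c + 1)) // φ x = 0} := by
    intro y
    refine Nat.card_congr ⟨fun a => ⟨a.1 - (y.val : ZMod (p ^ (c + 1))), ?_⟩,
      fun a => ⟨a.1 + (y.val : ZMod (p ^ (c + 1))), ?_⟩, ?_, ?_⟩
    · rw [map_sub, a.2, hpre, sub_self]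
    · rw [map_add, a.2, hpre, zero_add]
    · intro a; apply Subtype.ext; simp
    · intro a; apply Subtype.ext; simp
  have htot : p ^ (c + 1) = p * Nat.card {x : ZMod (p ^ (c + 1)) // φ x = 0} := by
    have h1 : Nat.card (ZMod (p ^ (c + 1))) =
        Nat.card (Σ y : ZMod p, {x : ZMod (p ^ (c + 1)) // φ x = y}) :=
      (Nat.card_congr (Equiv.sigmaFiberEquiv φ)).symm
    rw [Nat.card_zmod, nat_card_sigma] at h1
    simp only [htrans, Finset.sum_const, Finset.card_univ, smul_eq_mul] at h1
    have hc : Fintype.card (ZMod p) = p := ZMod.card p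
    rw [hc] at h1
    exact h1
  rw [htrans y]
  have : p * Nat.card {x : ZMod (p ^ (c + 1)) // φ x = 0} = p * p ^ c := by
    rw [← htot, pow_succ, mul_comm]
  exact Nat.eq_of_mul_eq_mul_left hp.out.pos this

lemma card_matrix_fiber {α β : Type*} [Fintype α] [Fintype β] (c : ℕ) (h : p ∣ p ^ (c + 1))
    (N : Matrix α β (ZMod p)) :
    Nat.card {M : Matrix α β (ZMod (p ^ (c + 1))) // M.map (ZMod.castHom h (ZMod p)) = N} =
      (p ^ c) ^ (Fintype.card α * Fintype.card β) := by
  haveI : NeZero (p ^ (c + 1)) := ⟨pow_ne_zero _ hp.out.ne_zero⟩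
  haveI : NeZero p := ⟨hp.out.ne_zero⟩
  set φ := ZMod.castHom h (ZMod p) with hφ
  have e1 : {M : Matrix α β (ZMod (p ^ (c + 1))) // M.map φ = N} ≃
      (∀ i : α, ∀ j : β, {x : ZMod (p ^ (c + 1)) // φ x = N i j}) :=
    ⟨fun M i j => ⟨M.1 i j, congrFun (congrFun M.2 i) j⟩,
      fun f => ⟨Matrix.of fun i j => (f i j).1, by funext i j; exact (f i j).2⟩,
      fun M => rfl, fun f => rfl⟩
  have e2 : (∀ i : α, ∀ j : β, {x : ZMod (p ^ (c + 1)) // φ x = N i j}) ≃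
      (∀ _ : α, ∀ _ : β, {x : ZMod (p ^ (c + 1)) // φ x = 0}) := by
    refine Equiv.piCongrRight fun i => Equiv.piCongrRight fun j => ?_
    refine ⟨fun a => ⟨a.1 - ((N i j).val : ZMod (p ^ (c + 1))), ?_⟩,
      fun a => ⟨a.1 + ((N i j).val : ZMod (p ^ (c + 1))), ?_⟩, ?_, ?_⟩
    · rw [map_sub, a.2, map_natCast, ZMod.natCast_rightInverse, sub_self]
    · rw [map_add, a.2, map_natCast, ZMod.natCast_rightInverse, zero_add]
    · intro a; apply Subtype.ext; simp
    · intro a; apply Subtype.ext; simp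
  have e := e1.trans e2
  rw [Nat.card_congr e]
  rw [Nat.card_pi]
  have hz : ∀ _ : α, ∀ _ : β, True := fun _ _ => trivial
  have hcard0 : Nat.card {x : ZMod (p ^ (c + 1)) // φ x = 0} = p ^ c :=
    card_zmod_fiber c h 0
  simp only [Nat.card_pi, hcard0, Finset.prod_const, Finset.card_univ]
  rw [← pow_mul, mul_comm (Fintype.card β)]

/-! ### Counting linearly independent families over `ZMod p` -/

lemma card_li_fun {η ι : Type*} [Fintype η] [Fintype ι] :
    Nat.card {s : ι → (η → ZMod p) // LinearIndependent (ZMod p) s} =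
      ∏ i ∈ Finset.range (Fintype.card ι), (p ^ Fintype.card η - p ^ i) := by
  classical
  haveI : NeZero p := ⟨hp.out.ne_zero⟩
  have hfr : Module.finrank (ZMod p) (η → ZMod p) = Fintype.card η := by
    simp [Module.finrank_fintype_fun_eq_card]
  have ecard : {s : ι → (η → ZMod p) // LinearIndependent (ZMod p) s} ≃
      {s : Fin (Fintype.card ι) → (η → ZMod p) // LinearIndependent (ZMod p) s} := by
    refine Equiv.subtypeEquiv (Equiv.arrowCongr (Fintype.equivFin ι) (Equiv.refl _)) ?_
    intro s
    constructor
    · intro hs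
      have : (⇑(Equiv.arrowCongr (Fintype.equivFin ι) (Equiv.refl (η → ZMod p))) s) =
          s ∘ (Fintype.equivFin ι).symm := by
        funext j; simp [Equiv.arrowCongr]
      rw [this]
      exact (linearIndependent_equiv (Fintype.equivFin ι).symm).mpr hs
    · intro hs
      have : (⇑(Equiv.arrowCongr (Fintype.equivFin ι) (Equiv.refl (η → ZMod p))) s) =
          s ∘ (Fintype.equivFin ι).symm := by
        funext j; simp [Equiv.arrowCongr]
      rw [this] at hs
      exact (linearIndependent_equiv (Fintype.equivFin ι).symm).mp hs
  rw [Nat.card_congr ecard]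
  rcases le_or_gt (Fintype.card ι) (Fintype.card η) with hle | hlt
  · have := card_linearIndependent (K := ZMod p) (V := η → ZMod p)
      (k := Fintype.card ι) (by rw [hfr]; exact hle)
    rw [this]
    rw [← Fin.prod_univ_eq_prod_range (fun i => p ^ Fintype.card η - p ^ i) (Fintype.card ι)]
    apply Finset.prod_congr rfl
    intro i _
    rw [ZMod.card, hfr]
  · have hempty : IsEmpty
        {s : Fin (Fintype.card ι) → (η → ZMod p) // LinearIndependent (ZMod p) s} := by
      constructor
      rintro ⟨s, hs⟩
      have := hs.fintype_card_le_finrank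
      rw [hfr, Fintype.card_fin] at this
      omega
    rw [Nat.card_of_isEmpty]
    symm
    apply Finset.prod_eq_zero (Finset.mem_range.mpr hlt)
    simp

/-- Counting matrices over `ZMod (p^(c+1))` whose reduction mod `p` has linearly
independent columns. -/
lemma card_li_matrix {η ι : Type*} [Fintype η] [Fintype ι] (c : ℕ) (h : p ∣ p ^ (c + 1)) :
    Nat.card {M : Matrix η ι (ZMod (p ^ (c + 1))) //
        LinearIndependent (ZMod p) (M.map (ZMod.castHom h (ZMod p)))ᵀ} =
      (p ^ c) ^ (Fintype.card η * Fintype.card ι) *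
        ∏ i ∈ Finset.range (Fintype.card ι), (p ^ Fintype.card η - p ^ i) := by
  haveI : NeZero (p ^ (c + 1)) := ⟨pow_ne_zero _ hp.out.ne_zero⟩
  haveI : NeZero p := ⟨hp.out.ne_zero⟩
  have := card_comp_eq (fun M : Matrix η ι (ZMod (p ^ (c + 1))) =>
      M.map (ZMod.castHom h (ZMod p)))
    (fun N : Matrix η ι (ZMod p) => LinearIndependent (ZMod p) Nᵀ)
    ((p ^ c) ^ (Fintype.card η * Fintype.card ι))
    (fun N => card_matrix_fiber c h N)
  rw [this]
  congr 1
  have e : {N : Matrix η ι (ZMod p) // LinearIndependent (ZMod p) Nᵀ} ≃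
      {s : ι → (η → ZMod p) // LinearIndependent (ZMod p) s} :=
    ⟨fun N => ⟨N.1ᵀ, N.2⟩, fun s => ⟨(Matrix.of s.1)ᵀ, s.2⟩, fun N => rfl, fun s => rfl⟩
  rw [Nat.card_congr e, card_li_fun]

/-! ### Rank and linear independence -/

lemma rank_eq_card_iff_li {α β : Type*} [Fintype α] [Fintype β]
    (M : Matrix α β (ZMod p)) :
    M.rank = Fintype.card β ↔ LinearIndependent (ZMod p) Mᵀ := by
  rw [Matrix.rank_eq_finrank_span_cols]
  rw [linearIndependent_iff_card_eq_finrank_span (b := Mᵀ)]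
  unfold Set.finrank
  exact eq_comm

lemma rank_submatrix_row_equiv {α β γ : Type*} [Fintype α] [Fintype β] [Fintype γ]
    (M : Matrix α β (ZMod p)) (e : γ ≃ α) :
    (M.submatrix e id).rank = M.rank := by
  rw [Matrix.rank_eq_finrank_span_row, Matrix.rank_eq_finrank_span_row]
  have hrange : Set.range (M.submatrix (⇑e) id).row = Set.range M.row := by
    have h0 : (M.submatrix (⇑e) id).row = M.row ∘ e := rfl
    rw [h0, Set.range_comp, Equiv.range_eq_univ, Set.image_univ]
  rw [hrange]

/-! ### Multiplication by an invertible matrix preserves linear independence of columns -/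

lemma li_mul_iff {n' ι : Type*} [Fintype n'] [DecidableEq n'] [Fintype ι]
    (U : Matrix n' n' (ZMod p)) (hU : IsUnit U.det) (W : Matrix n' ι (ZMod p)) :
    LinearIndependent (ZMod p) (U * W)ᵀ ↔ LinearIndependent (ZMod p) Wᵀ := by
  haveI := U.invertibleOfIsUnitDet hU
  have hcomp : ((U * W)ᵀ : ι → n' → ZMod p) =
      (U.toLinearEquiv' ‹Invertible U›).toLinearMap ∘ (Wᵀ : ι → n' → ZMod p) := by
    funext j
    ext i
    simp [Matrix.toLinearEquiv', Matrix.toLin'_apply, Matrix.mulVec, Matrix.mul_apply,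
      dotProduct, Matrix.transpose_apply, Matrix.mulVecLin_apply, Function.comp_apply]
    show _ = (U.mulVecLin (fun i' => W i' j)) i
    simp [Matrix.mulVecLin_apply, Matrix.mulVec, dotProduct]
  rw [hcomp]
  exact LinearMap.linearIndependent_iff _ (LinearMap.ker_eq_bot_of_injective
    (U.toLinearEquiv' ‹Invertible U›).injective)

/-! ### Unit reflection for `ZMod (p^(c+1)) → ZMod p` -/

lemma zmod_isUnit_of_map_unit (c : ℕ) (h : p ∣ p ^ (c + 1)) (x : ZMod (p ^ (c + 1)))
    (hx : IsUnit (ZMod.castHom h (ZMod p) x)) : IsUnit x := by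
  haveI : NeZero p := ⟨hp.out.ne_zero⟩
  haveI : NeZero (p ^ (c + 1)) := ⟨pow_ne_zero _ hp.out.ne_zero⟩
  have hval : ((x.val : ℕ) : ZMod (p ^ (c + 1))) = x := ZMod.natCast_rightInverse x
  have h1 : IsUnit ((x.val : ℕ) : ZMod p) := by
    rw [← map_natCast (ZMod.castHom h (ZMod p)) x.val, hval]; exact hx
  have h2 : Nat.Coprime x.val p := (ZMod.isUnit_iff_coprime _ _).mp h1
  have h3 : Nat.Coprime x.val (p ^ (c + 1)) := Nat.Coprime.pow_right _ h2
  rw [← hval]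
  exact (ZMod.isUnit_iff_coprime _ _).mpr h3

/-! ### Completing a primitive matrix to an invertible one -/

lemma exists_complete (c : ℕ) (h : p ∣ p ^ (c + 1)) {ι κ : Type*}
    [Fintype ι] [Fintype κ] [DecidableEq ι] [DecidableEq κ]
    (X : Matrix (ι ⊕ κ) ι (ZMod (p ^ (c + 1))))
    (hX : LinearIndependent (ZMod p) (X.map (ZMod.castHom h (ZMod p)))ᵀ) :
    ∃ G : Matrix (ι ⊕ κ) (ι ⊕ κ) (ZMod (p ^ (c + 1))),
      IsUnit G.det ∧ G.submatrix id Sum.inl = X := by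
  classical
  haveI : NeZero p := ⟨hp.out.ne_zero⟩
  haveI : NeZero (p ^ (c + 1)) := ⟨pow_ne_zero _ hp.out.ne_zero⟩
  set F := ZMod p
  set φ := ZMod.castHom h F with hφ
  rcases isEmpty_or_nonempty (ι ⊕ κ) with hemp | hne
  · refine ⟨1, by simp, ?_⟩
    funext i j
    exact (hemp.false i).elim
  -- the reduced columns
  set xb : ι → ((ι ⊕ κ) → F) := (X.map φ)ᵀ with hxb
  have hfr : Module.finrank F ((ι ⊕ κ) → F) = Fintype.card (ι ⊕ κ) :=
    Module.finrank_fintype_fun_eq_card F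
  -- complement of the span
  obtain ⟨W, hW⟩ := Submodule.exists_isCompl (Submodule.span F (Set.range xb))
  have hspan_fr : Module.finrank F (Submodule.span F (Set.range xb)) = Fintype.card ι :=
    finrank_span_eq_card hX
  have hW_fr : Module.finrank F W = Fintype.card κ := by
    have := Submodule.finrank_add_eq_of_isCompl hW
    rw [hspan_fr, hfr, Fintype.card_sum] at this
    omega
  let bW : Basis (Fin (Module.finrank F W)) F W := Module.finBasis F W
  let eκ : Fin (Module.finrank F W) ≃ κ := Fintype.equivFinOfCardEq hW_fr.symm |>.symm
  let bκ : Basis κ F W := bW.reindex eκ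
  set w : κ → ((ι ⊕ κ) → F) := fun j => (bκ j : (ι ⊕ κ) → F) with hw
  have hw_li : LinearIndependent F w := by
    have := bκ.linearIndependent
    exact this.map' W.subtype (Submodule.ker_subtype W)
  have hdisj : Disjoint (Submodule.span F (Set.range xb)) (Submodule.span F (Set.range w)) := by
    refine hW.disjoint.mono_right ?_
    rw [Submodule.span_le]
    rintro _ ⟨j, rfl⟩
    exact (bκ j).2
  have hb_li : LinearIndependent F (Sum.elim xb w) := hX.sum_type hw_li hdisj
  have hcards : Fintype.card (ι ⊕ κ) = Module.finrank F ((ι ⊕ κ) → F) := hfr.symm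
  let b : Basis (ι ⊕ κ) F ((ι ⊕ κ) → F) :=
    basisOfLinearIndependentOfCardEqFinrank hb_li hcards
  have hbcoe : ⇑b = Sum.elim xb w := coe_basisOfLinearIndependentOfCardEqFinrank hb_li hcards
  -- the reduced completed matrix is invertible
  set Gbar : Matrix (ι ⊕ κ) (ι ⊕ κ) F := ((Pi.basisFun F (ι ⊕ κ)).toMatrix b) with hGbar
  haveI : Invertible Gbar := (Pi.basisFun F (ι ⊕ κ)).invertibleToMatrix b
  have hGbar_det : IsUnit Gbar.det := Matrix.isUnit_det_of_invertible Gbar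
  have hGbar_apply : ∀ i j, Gbar i j = b j i := by
    intro i j
    rw [hGbar, Basis.toMatrix_apply, Pi.basisFun_repr]
  -- lift
  set G : Matrix (ι ⊕ κ) (ι ⊕ κ) (ZMod (p ^ (c + 1))) :=
    Matrix.of (fun i j => Sum.elim (fun j' => X i j') (fun j' => ((w j' i).val : ZMod (p ^ (c + 1)))) j)
    with hG
  have hmap : G.map φ = Gbar := by
    funext i j
    rcases j with j' | j'
    · have : b (Sum.inl j') = xb j' := by rw [hbcoe]; rfl
      rw [hGbar_apply, this]
      rfl
    · have : b (Sum.inr j') = w j' := by rw [hbcoe]; rfl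
      rw [hGbar_apply, this]
      show φ (((w j' i).val : ZMod (p ^ (c + 1)))) = w j' i
      rw [map_natCast]
      exact ZMod.natCast_rightInverse (w j' i)
  have hdet : IsUnit G.det := by
    apply zmod_isUnit_of_map_unit c h
    have : φ G.det = (G.map φ).det := (RingHom.map_det φ G).symm ▸ rfl
    rw [show (ZMod.castHom h (ZMod p)) G.det = (G.map (ZMod.castHom h (ZMod p))).det from
      (RingHom.map_det (ZMod.castHom h (ZMod p)) G), hmap]
    exact hGbar_det
  exact ⟨G, hdet, by funext i j; rfl⟩

/-! ### The block linear independence criterion -/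

lemma li_block {s r : ℕ} {κ : Type*} [Fintype κ]
    (W : Matrix ((Fin s ⊕ Fin r) ⊕ κ) (Fin s ⊕ Fin r) (ZMod p))
    (hW : ∀ i j, W (Sum.inl i) j =
      Matrix.fromBlocks (1 : Matrix (Fin s) (Fin s) (ZMod p)) 0 0 0 i j) :
    LinearIndependent (ZMod p) Wᵀ ↔
      LinearIndependent (ZMod p)
        (fun (j : Fin r) (i : κ) => W (Sum.inr i) (Sum.inr j)) := by
  classical
  constructor
  · intro hfull
    replace hfull := Fintype.linearIndependent_iff.mp hfull
    rw [Fintype.linearIndependent_iff]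
    intro g hg
    set gg : (Fin s ⊕ Fin r) → ZMod p := Sum.elim 0 g with hgg
    have hsum : ∑ t, gg t • Wᵀ t = 0 := by
      funext i
      have hgeval : (∑ t, gg t • Wᵀ t) i = ∑ t, gg t * W i t := by
        simp [Finset.sum_apply, Matrix.transpose_apply]
      rw [hgeval]
      rw [Fintype.sum_sum_type]
      have h0 : ∑ b : Fin s, gg (Sum.inl b) * W i (Sum.inl b) = 0 := by
        simp [hgg]
      rw [h0, zero_add]
      rcases i with i' | i'
      · have : ∀ j : Fin r, W (Sum.inl i') (Sum.inr j) = 0 := by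
          intro j
          rw [hW]
          rcases i' with b | b <;> simp [Matrix.fromBlocks]
        simp [hgg, this]
      · have := congrFun hg i'
        simpa [hgg, Finset.sum_apply] using this
    intro j
    have := hfull gg hsum (Sum.inr j)
    simpa [hgg] using this
  · intro hz
    rw [Fintype.linearIndependent_iff] at hz
    refine Fintype.linearIndependent_iff.mpr ?_
    intro g hg
    have hgeval : ∀ i, ∑ t, g t * W i t = 0 := by
      intro i
      have := congrFun hg i
      simpa [Finset.sum_apply, Matrix.transpose_apply] using this
    have h1 : ∀ b : Fin s, g (Sum.inl b) = 0 := by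
      intro b
      have := hgeval (Sum.inl (Sum.inl b))
      rw [Fintype.sum_sum_type] at this
      have hl : ∑ b' : Fin s, g (Sum.inl b') * W (Sum.inl (Sum.inl b)) (Sum.inl b') =
          g (Sum.inl b) := by
        have : ∀ b' : Fin s, W (Sum.inl (Sum.inl b)) (Sum.inl b') =
            if b' = b then 1 else 0 := by
          intro b'
          rw [hW]
          simp [Matrix.fromBlocks, Matrix.one_apply, eq_comm]
        simp [this]
      have hr : ∑ j : Fin r, g (Sum.inr j) * W (Sum.inl (Sum.inl b)) (Sum.inr j) = 0 := by
        have : ∀ j : Fin r, W (Sum.inl (Sum.inl b)) (Sum.inr j) = 0 := by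
          intro j
          rw [hW]
          simp [Matrix.fromBlocks]
        simp [this]
      rw [hl, hr] at this
      simpa using this
    have h2 : ∀ j : Fin r, g (Sum.inr j) = 0 := by
      apply hz
      funext i
      have := hgeval (Sum.inr i)
      rw [Fintype.sum_sum_type] at this
      have hl : ∑ b : Fin s, g (Sum.inl b) * W (Sum.inr i) (Sum.inl b) = 0 := by
        simp [h1]
      rw [hl, zero_add] at this
      simpa [Finset.sum_apply] using this
    rintro (b | j)
    · exact h1 b
    · exact h2 j

lemma nat_card_matrix {α β γ : Type*} [Fintype α] [Fintype β] [Finite γ] :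
    Nat.card (Matrix α β γ) = Nat.card γ ^ (Fintype.card α * Fintype.card β) := by
  show Nat.card (α → β → γ) = _
  rw [Nat.card_pi]
  simp only [Nat.card_pi, Finset.prod_const, Finset.card_univ]
  rw [← pow_mul, mul_comm (Fintype.card β)]

end Aux

section Count

variable {p : ℕ} [hp : Fact p.Prime]

lemma count_formula (k m r : ℕ) (hr : r ≤ m) (a : ℕ)
    (B₁ : Matrix (Fin r) (Fin r) (PadicInt p)) :
    Nat.card {XY : Matrix (Fin (2 * k)) (Fin (m - r) ⊕ Fin r) (ZMod (p ^ (a + 1))) ×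
        Matrix (Fin (2 * k)) (Fin (m - r) ⊕ Fin r) (ZMod (p ^ (a + 1))) //
      XY.1ᵀ * XY.2 =
        (Matrix.fromBlocks (1 : Matrix (Fin (m - r)) (Fin (m - r)) (PadicInt p)) 0 0
          ((p : PadicInt p) • B₁)).map (PadicInt.toZModPow (a + 1)) ∧
      (XY.1.map (ZMod.castHom (dvd_pow_self p (Nat.succ_ne_zero a)) (ZMod p))).rank = m ∧
      (XY.2.map (ZMod.castHom (dvd_pow_self p (Nat.succ_ne_zero a)) (ZMod p))).rank = m} =
    p ^ (a * (2 * k * m) + (a + 1) * ((2 * k - m) * (m - r)) + a * ((2 * k - m) * r)) *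
      (∏ i ∈ Finset.range m, (p ^ (2 * k) - p ^ i)) *
      (∏ j ∈ Finset.range r, (p ^ (2 * k - m) - p ^ j)) := by
  classical
  haveI : NeZero p := ⟨hp.out.ne_zero⟩
  haveI : NeZero (p ^ (a + 1)) := ⟨pow_ne_zero _ hp.out.ne_zero⟩
  set R := ZMod (p ^ (a + 1)) with hR
  set F := ZMod p with hF
  set φ := ZMod.castHom (dvd_pow_self p (Nat.succ_ne_zero a)) (ZMod p) with hφ
  set ι := Fin (m - r) ⊕ Fin r with hι
  set κ := Fin (2 * k - m) with hκ
  set ρ := ι ⊕ κ with hρ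
  set T : Matrix ι ι R :=
    (Matrix.fromBlocks (1 : Matrix (Fin (m - r)) (Fin (m - r)) (PadicInt p)) 0 0
      ((p : PadicInt p) • B₁)).map (PadicInt.toZModPow (a + 1)) with hT
  rcases le_or_gt m (2 * k) with hm | hm
  swap
  · -- m > 2k : both sides are zero
    haveI : IsEmpty {XY : Matrix (Fin (2 * k)) (Fin (m - r) ⊕ Fin r) R ×
        Matrix (Fin (2 * k)) (Fin (m - r) ⊕ Fin r) R //
        XY.1ᵀ * XY.2 = T ∧ (XY.1.map φ).rank = m ∧ (XY.2.map φ).rank = m} := by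
      constructor
      rintro ⟨XY, hXY, hX, hY⟩
      have h1 : (XY.1.map φ).rank ≤ 2 * k := by
        have := Matrix.rank_le_card_height (XY.1.map φ)
        simpa using this
      omega
    have h0 : (∏ i ∈ Finset.range m, (p ^ (2 * k) - p ^ i)) = 0 :=
      Finset.prod_eq_zero (Finset.mem_range.mpr hm) (by simp)
    rw [Nat.card_of_isEmpty, h0, mul_zero, zero_mul]
  -- main case m ≤ 2k
  have hcι : Fintype.card ι = m := by
    simp [hι, Fintype.card_sum]; omega
  have hcκ : Fintype.card κ = 2 * k - m := by simp [hκ]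
  have hcρ : Fintype.card ρ = 2 * k := by
    simp [hρ, hι, hκ, Fintype.card_sum]; omega
  let ε : Fin (2 * k) ≃ ρ := (Fintype.equivFinOfCardEq hcρ).symm
  -- reduction of T mod p
  have hTbar : ∀ i j, φ (T i j) =
      Matrix.fromBlocks (1 : Matrix (Fin (m - r)) (Fin (m - r)) F) 0 0 0 i j := by
    intro i j
    rcases i with i' | i' <;> rcases j with j' | j'
    · show φ (PadicInt.toZModPow (a + 1)
          ((1 : Matrix (Fin (m - r)) (Fin (m - r)) (PadicInt p)) i' j')) =
        (1 : Matrix (Fin (m - r)) (Fin (m - r)) F) i' j'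
      by_cases hij : i' = j'
      · subst hij
        rw [Matrix.one_apply_eq, _root_.map_one, _root_.map_one, Matrix.one_apply_eq]
      · rw [Matrix.one_apply_ne hij, _root_.map_zero, _root_.map_zero, Matrix.one_apply_ne hij]
    · show φ (PadicInt.toZModPow (a + 1)
          ((0 : Matrix (Fin (m - r)) (Fin r) (PadicInt p)) i' j')) = 0
      simp
    · show φ (PadicInt.toZModPow (a + 1)
          ((0 : Matrix (Fin r) (Fin (m - r)) (PadicInt p)) i' j')) = 0
      simp
    · show φ (PadicInt.toZModPow (a + 1) (((p : PadicInt p) • B₁) i' j')) = 0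
      have hsm : ((p : PadicInt p) • B₁) i' j' = (p : PadicInt p) * B₁ i' j' := rfl
      rw [hsm, _root_.map_mul, _root_.map_mul]
      have hp0 : φ (PadicInt.toZModPow (a + 1) (p : PadicInt p)) = 0 := by
        have h1 : ((p : ℕ) : PadicInt p) = (p : PadicInt p) := rfl
        rw [← h1, map_natCast, map_natCast, ZMod.natCast_self]
      rw [hp0, zero_mul]
  -- Step A : reindex the rows
  set P : Matrix ρ ι R → Prop := fun X => LinearIndependent F (X.map φ)ᵀ with hP
  have hprod : ∀ X Y : Matrix (Fin (2 * k)) ι R,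
      (Matrix.reindex ε (Equiv.refl ι) X)ᵀ * (Matrix.reindex ε (Equiv.refl ι) Y) = Xᵀ * Y := by
    intro X Y
    rw [Matrix.reindex_apply, Matrix.reindex_apply, Matrix.transpose_submatrix]
    have := Matrix.submatrix_mul_equiv Xᵀ Y (⇑(Equiv.refl ι).symm) ε.symm (⇑(Equiv.refl ι).symm)
    simpa using this
  have hrank : ∀ X : Matrix (Fin (2 * k)) ι R,
      ((Matrix.reindex ε (Equiv.refl ι) X).map φ).rank = (X.map φ).rank := by
    intro X
    have hmap : (Matrix.reindex ε (Equiv.refl ι) X).map φ = (X.map φ).submatrix ε.symm id := by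
      rw [Matrix.reindex_apply]; rfl
    rw [hmap, rank_submatrix_row_equiv]
  have e₁ : {XY : Matrix (Fin (2 * k)) ι R × Matrix (Fin (2 * k)) ι R //
        XY.1ᵀ * XY.2 = T ∧ (XY.1.map φ).rank = m ∧ (XY.2.map φ).rank = m} ≃
      {XY : Matrix ρ ι R × Matrix ρ ι R // XY.1ᵀ * XY.2 = T ∧ P XY.1 ∧ P XY.2} := by
    refine Equiv.subtypeEquiv
      ((Matrix.reindex ε (Equiv.refl ι)).prodCongr (Matrix.reindex ε (Equiv.refl ι))) ?_
    intro XY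
    simp only [Equiv.prodCongr_apply, Prod.map]
    rw [hprod XY.1 XY.2, hP]
    constructor
    · rintro ⟨h1, h2, h3⟩
      refine ⟨h1, ?_, ?_⟩
      · exact (rank_eq_card_iff_li _).mp (by rw [hrank XY.1, hcι]; exact h2)
      · exact (rank_eq_card_iff_li _).mp (by rw [hrank XY.2, hcι]; exact h3)
    · rintro ⟨h1, h2, h3⟩
      refine ⟨h1, ?_, ?_⟩
      · have := (rank_eq_card_iff_li _).mpr h2
        rw [hrank XY.1, hcι] at this; exact this
      · have := (rank_eq_card_iff_li _).mpr h3
        rw [hrank XY.2, hcι] at this; exact this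
  -- Step B : fibration over the first matrix
  have e₂ : {XY : Matrix ρ ι R × Matrix ρ ι R // XY.1ᵀ * XY.2 = T ∧ P XY.1 ∧ P XY.2} ≃
      Σ X : {X : Matrix ρ ι R // P X},
        {Y : Matrix ρ ι R // (X : Matrix ρ ι R)ᵀ * Y = T ∧ P Y} :=
    ⟨fun s => ⟨⟨s.1.1, s.2.2.1⟩, ⟨s.1.2, s.2.1, s.2.2.2⟩⟩,
     fun t => ⟨(t.1.1, t.2.1), t.2.2.1, t.1.2, t.2.2.2⟩,
     fun s => rfl, fun t => rfl⟩
  -- Step C : all fibers have the same cardinality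
  have hfib : ∀ X : {X : Matrix ρ ι R // P X},
      Nat.card {Y : Matrix ρ ι R // (X : Matrix ρ ι R)ᵀ * Y = T ∧ P Y} =
        Nat.card {Y : Matrix ρ ι R // Y.submatrix Sum.inl id = T ∧ P Y} := by
    rintro ⟨X, hX⟩
    obtain ⟨G, hG, hGE⟩ := exists_complete a (dvd_pow_self p (Nat.succ_ne_zero a)) X hX
    have hdetT : IsUnit Gᵀ.det := by rw [Matrix.det_transpose]; exact hG
    have key : ∀ Y : Matrix ρ ι R, Xᵀ * Y = (Gᵀ * Y).submatrix Sum.inl id := by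
      intro Y
      funext j j'
      simp only [Matrix.mul_apply, Matrix.transpose_apply, Matrix.submatrix_apply, id_eq]
      apply Finset.sum_congr rfl
      intro t _
      rw [← hGE]
      rfl
    have hliG : ∀ Y : Matrix ρ ι R, P (Gᵀ * Y) ↔ P Y := by
      intro Y
      have hmapmul : (Gᵀ * Y).map φ = (Gᵀ.map φ) * (Y.map φ) := Matrix.map_mul
      have hdetb : IsUnit (Gᵀ.map φ).det := by
        have h1 : φ Gᵀ.det = (Gᵀ.map φ).det := RingHom.map_det φ Gᵀ
        rw [← h1]
        exact hdetT.map φ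
      simp only [hP]
      rw [hmapmul]
      exact li_mul_iff (Gᵀ.map φ) hdetb (Y.map φ)
    apply Nat.card_congr
    refine ⟨fun Y => ⟨Gᵀ * Y.1, ?_, (hliG Y.1).mpr Y.2.2⟩,
      fun Y' => ⟨Gᵀ⁻¹ * Y'.1, ?_, ?_⟩, ?_, ?_⟩
    · rw [← key]; exact Y.2.1
    · rw [key, Matrix.mul_nonsing_inv_cancel_left _ _ hdetT]; exact Y'.2.1
    · have hY' : P (Gᵀ * (Gᵀ⁻¹ * Y'.1)) := by
        rw [Matrix.mul_nonsing_inv_cancel_left _ _ hdetT]; exact Y'.2.2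
      exact (hliG _).mp hY'
    · intro Y
      apply Subtype.ext
      exact Matrix.nonsing_inv_mul_cancel_left _ _ hdetT
    · intro Y'
      apply Subtype.ext
      exact Matrix.mul_nonsing_inv_cancel_left _ _ hdetT
  -- Step D : the standard fiber
  have e₄ : {Y : Matrix ρ ι R // Y.submatrix Sum.inl id = T ∧ P Y} ≃
      Matrix κ (Fin (m - r)) R × {Z : Matrix κ (Fin r) R // LinearIndependent F (Z.map φ)ᵀ} := by
    refine ⟨fun Y => (Matrix.of fun i j => Y.1 (Sum.inr i) (Sum.inl j),
        ⟨Matrix.of fun i j => Y.1 (Sum.inr i) (Sum.inr j), ?_⟩),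
      fun Z => ⟨Matrix.of (Sum.elim (fun i j => T i j)
        (fun i => Sum.elim (Z.1 i) (Z.2.1 i))), ?_, ?_⟩, ?_, ?_⟩
    · have htop : ∀ i j, (Y.1.map φ) (Sum.inl i) j =
          Matrix.fromBlocks (1 : Matrix (Fin (m - r)) (Fin (m - r)) F) 0 0 0 i j := by
        intro i j
        have h0 : Y.1 (Sum.inl i) j = T i j := congrFun (congrFun Y.2.1 i) j
        show φ (Y.1 (Sum.inl i) j) = _
        rw [h0]
        exact hTbar i j
      exact (li_block (Y.1.map φ) htop).mp Y.2.2
    · funext i j; rfl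
    · have htop : ∀ i j, ((Matrix.of (Sum.elim (fun i j => T i j)
          (fun i => Sum.elim (Z.1 i) (Z.2.1 i)))).map φ) (Sum.inl i) j =
          Matrix.fromBlocks (1 : Matrix (Fin (m - r)) (Fin (m - r)) F) 0 0 0 i j := by
        intro i j
        exact hTbar i j
      exact (li_block _ htop).mpr Z.2.2
    · intro Y
      apply Subtype.ext
      funext i j
      rcases i with i' | i'
      · exact (congrFun (congrFun Y.2.1 i') j).symm
      · rcases j with j' | j' <;> rfl
    · intro Z
      rfl
  -- Put the cardinalities together
  haveI : Finite R := Finite.of_fintype R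
  letI : Fintype {X : Matrix ρ ι R // P X} := Fintype.ofFinite _
  have hcard : Nat.card {XY : Matrix (Fin (2 * k)) ι R × Matrix (Fin (2 * k)) ι R //
        XY.1ᵀ * XY.2 = T ∧ (XY.1.map φ).rank = m ∧ (XY.2.map φ).rank = m} =
      Nat.card {X : Matrix ρ ι R // P X} *
        Nat.card {Y : Matrix ρ ι R // Y.submatrix Sum.inl id = T ∧ P Y} := by
    rw [Nat.card_congr e₁, Nat.card_congr e₂, nat_card_sigma]
    rw [Finset.sum_congr rfl (fun X _ => hfib X)]
    rw [Finset.sum_const, Finset.card_univ, smul_eq_mul]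
    simp [Nat.card_eq_fintype_card]
  rw [hcard]
  have hPcard : Nat.card {X : Matrix ρ ι R // P X} =
      (p ^ a) ^ (2 * k * m) * ∏ i ∈ Finset.range m, (p ^ (2 * k) - p ^ i) := by
    have := card_li_matrix (η := ρ) (ι := ι) a (dvd_pow_self p (Nat.succ_ne_zero a))
    rw [hcρ, hcι] at this
    exact this
  have hZcard : Nat.card {Z : Matrix κ (Fin r) R // LinearIndependent F (Z.map φ)ᵀ} =
      (p ^ a) ^ ((2 * k - m) * r) * ∏ j ∈ Finset.range r, (p ^ (2 * k - m) - p ^ j) := by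
    have := card_li_matrix (η := κ) (ι := Fin r) a (dvd_pow_self p (Nat.succ_ne_zero a))
    rw [hcκ, Fintype.card_fin] at this
    exact this
  have hFcard : Nat.card {Y : Matrix ρ ι R // Y.submatrix Sum.inl id = T ∧ P Y} =
      (p ^ (a + 1)) ^ ((2 * k - m) * (m - r)) *
        ((p ^ a) ^ ((2 * k - m) * r) * ∏ j ∈ Finset.range r, (p ^ (2 * k - m) - p ^ j)) := by
    rw [Nat.card_congr e₄, Nat.card_prod, hZcard, nat_card_matrix, Nat.card_zmod, hcκ,
      Fintype.card_fin]
  rw [hPcard, hFcard]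
  rw [← pow_mul, ← pow_mul, ← pow_mul, pow_add, pow_add]
  ring

end Count


/-- Lemma 5.2.2(2) (split case): for a prime `p`, integers `k ≥ 1`, `m ≥ r ≥ 0`, an arbitrary
`B₁ ∈ M_r(ℤ_p)`, and `T = 1_{m−r} ⊥ p·B₁`,
`lim_{a→∞} p^{−a(4km−m²)} · #{(X,Y) ∈ M_{2k,m}(ℤ/p^a)² : Xᵀ Y = T mod p^a,
  X mod p and Y mod p both of rank m} = ∏_{i=0}^{m+r−1} (1 − p^{i−2k})`
(the limit is taken along the moduli `p^{a+1}`, `a → ∞`; the column index set of size `m`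
is realized as `Fin (m−r) ⊕ Fin r`). -/
theorem stmt7 (p k m r : ℕ) [hp : Fact p.Prime] (hk : 1 ≤ k) (hr : r ≤ m)
    (B₁ : Matrix (Fin r) (Fin r) (PadicInt p)) :
    Filter.Tendsto (fun a : ℕ =>
        (p : ℝ) ^ (-((a : ℤ) + 1) * (4 * k * m - m ^ 2)) *
          (Nat.card {XY : Matrix (Fin (2 * k)) (Fin (m - r) ⊕ Fin r) (ZMod (p ^ (a + 1))) ×
              Matrix (Fin (2 * k)) (Fin (m - r) ⊕ Fin r) (ZMod (p ^ (a + 1))) //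
            XY.1ᵀ * XY.2 =
              (Matrix.fromBlocks (1 : Matrix (Fin (m - r)) (Fin (m - r)) (PadicInt p)) 0 0
                ((p : PadicInt p) • B₁)).map (PadicInt.toZModPow (a + 1)) ∧
            (XY.1.map (ZMod.castHom (dvd_pow_self p (Nat.succ_ne_zero a)) (ZMod p))).rank = m ∧
            (XY.2.map (ZMod.castHom (dvd_pow_self p (Nat.succ_ne_zero a)) (ZMod p))).rank = m}
            : ℝ))
      atTop (𝓝 (∏ i ∈ Finset.range (m + r), (1 - (p : ℝ) ^ ((i : ℤ) - 2 * k)))) := by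
  have hp0 : (p : ℝ) ≠ 0 := by
    exact_mod_cast hp.out.ne_zero
  have key : ∀ a : ℕ,
      (p : ℝ) ^ (-((a : ℤ) + 1) * (4 * k * m - m ^ 2)) *
          (Nat.card {XY : Matrix (Fin (2 * k)) (Fin (m - r) ⊕ Fin r) (ZMod (p ^ (a + 1))) ×
              Matrix (Fin (2 * k)) (Fin (m - r) ⊕ Fin r) (ZMod (p ^ (a + 1))) //
            XY.1ᵀ * XY.2 =
              (Matrix.fromBlocks (1 : Matrix (Fin (m - r)) (Fin (m - r)) (PadicInt p)) 0 0
                ((p : PadicInt p) • B₁)).map (PadicInt.toZModPow (a + 1)) ∧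
            (XY.1.map (ZMod.castHom (dvd_pow_self p (Nat.succ_ne_zero a)) (ZMod p))).rank = m ∧
            (XY.2.map (ZMod.castHom (dvd_pow_self p (Nat.succ_ne_zero a)) (ZMod p))).rank = m}
            : ℝ) =
        ∏ i ∈ Finset.range (m + r), (1 - (p : ℝ) ^ ((i : ℤ) - 2 * k)) := by
    intro a
    rw [count_formula k m r hr a B₁]
    by_cases hmr : m + r ≤ 2 * k
    · -- all factors positive case
      have hm : m ≤ 2 * k := le_trans (Nat.le_add_right m r) hmr
      have hA : ((∏ i ∈ Finset.range m, (p ^ (2 * k) - p ^ i) : ℕ) : ℝ) =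
          (p : ℝ) ^ (2 * k * m) *
            ∏ i ∈ Finset.range m, (1 - (p : ℝ) ^ ((i : ℤ) - 2 * k)) := by
        rw [Nat.cast_prod]
        have hfac : ∀ i ∈ Finset.range m, ((p ^ (2 * k) - p ^ i : ℕ) : ℝ) =
            (p : ℝ) ^ (2 * k) * (1 - (p : ℝ) ^ ((i : ℤ) - 2 * k)) := by
          intro i hi
          have hi' : i ≤ 2 * k := by
            have := Finset.mem_range.mp hi; omega
          have hile : p ^ i ≤ p ^ (2 * k) := Nat.pow_le_pow_right hp.out.pos hi'
          have h2 : (p : ℝ) ^ (2 * k) * (p : ℝ) ^ ((i : ℤ) - 2 * k) = (p : ℝ) ^ i := by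
            rw [← zpow_natCast (p : ℝ) (2 * k), ← zpow_add₀ hp0, ← zpow_natCast (p : ℝ) i]
            congr 1
            push_cast
            ring
          rw [Nat.cast_sub hile]
          push_cast
          rw [mul_sub, mul_one, h2]
        rw [Finset.prod_congr rfl hfac, Finset.prod_mul_distrib, Finset.prod_const,
          Finset.card_range, ← pow_mul]
      have hB : ((∏ j ∈ Finset.range r, (p ^ (2 * k - m) - p ^ j) : ℕ) : ℝ) =
          (p : ℝ) ^ ((2 * k - m) * r) *
            ∏ j ∈ Finset.range r, (1 - (p : ℝ) ^ (((m + j : ℕ) : ℤ) - 2 * k)) := by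
        rw [Nat.cast_prod]
        have hfac : ∀ j ∈ Finset.range r, ((p ^ (2 * k - m) - p ^ j : ℕ) : ℝ) =
            (p : ℝ) ^ (2 * k - m) * (1 - (p : ℝ) ^ (((m + j : ℕ) : ℤ) - 2 * k)) := by
          intro j hj
          have hj' : j ≤ 2 * k - m := by
            have := Finset.mem_range.mp hj; omega
          have hile : p ^ j ≤ p ^ (2 * k - m) := Nat.pow_le_pow_right hp.out.pos hj'
          have h2 : (p : ℝ) ^ (2 * k - m) * (p : ℝ) ^ (((m + j : ℕ) : ℤ) - 2 * k) =
              (p : ℝ) ^ j := by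
            rw [← zpow_natCast (p : ℝ) (2 * k - m), ← zpow_add₀ hp0, ← zpow_natCast (p : ℝ) j]
            congr 1
            push_cast [Nat.cast_sub hm]
            ring
          rw [Nat.cast_sub hile]
          push_cast at h2 ⊢
          rw [mul_sub, mul_one, h2]
        rw [Finset.prod_congr rfl hfac, Finset.prod_mul_distrib, Finset.prod_const,
          Finset.card_range, ← pow_mul]
      rw [Nat.cast_mul, Nat.cast_mul, Nat.cast_pow, hA, hB]
      set E := a * (2 * k * m) + (a + 1) * ((2 * k - m) * (m - r)) + a * ((2 * k - m) * r)
        with hE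
      have hcollect : ((p : ℝ) ^ E *
            ((p : ℝ) ^ (2 * k * m) * ∏ i ∈ Finset.range m, (1 - (p : ℝ) ^ ((i : ℤ) - 2 * k)))) *
            ((p : ℝ) ^ ((2 * k - m) * r) *
              ∏ j ∈ Finset.range r, (1 - (p : ℝ) ^ (((m + j : ℕ) : ℤ) - 2 * k))) =
          (p : ℝ) ^ (E + 2 * k * m + (2 * k - m) * r) *
            ((∏ i ∈ Finset.range m, (1 - (p : ℝ) ^ ((i : ℤ) - 2 * k))) *
              ∏ j ∈ Finset.range r, (1 - (p : ℝ) ^ (((m + j : ℕ) : ℤ) - 2 * k))) := by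
        rw [pow_add, pow_add]
        ring
      rw [hcollect]
      have hexp : ((E + 2 * k * m + (2 * k - m) * r : ℕ) : ℤ) =
          ((a : ℤ) + 1) * (4 * k * m - m ^ 2) := by
        rw [hE]
        push_cast [Nat.cast_sub hm, Nat.cast_sub hr]
        ring
      rw [← zpow_natCast (p : ℝ) (E + 2 * k * m + (2 * k - m) * r), hexp, ← mul_assoc,
        ← zpow_add₀ hp0, neg_mul, neg_add_cancel, zpow_zero, one_mul]
      rw [Finset.prod_range_add (fun i => 1 - (p : ℝ) ^ ((i : ℤ) - 2 * k)) m r]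
    · -- degenerate case : both sides vanish
      have hrhs : (∏ i ∈ Finset.range (m + r), (1 - (p : ℝ) ^ ((i : ℤ) - 2 * k))) = 0 := by
        apply Finset.prod_eq_zero (Finset.mem_range.mpr (by omega : 2 * k < m + r))
        push_cast
        simp
      rw [hrhs]
      rcases le_or_gt m (2 * k) with hm | hm
      · have h0 : (∏ j ∈ Finset.range r, (p ^ (2 * k - m) - p ^ j)) = 0 :=
          Finset.prod_eq_zero (Finset.mem_range.mpr (by omega : 2 * k - m < r)) (by simp)
        rw [h0, mul_zero, Nat.cast_zero, mul_zero]
      · have h0 : (∏ i ∈ Finset.range m, (p ^ (2 * k) - p ^ i)) = 0 :=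
          Finset.prod_eq_zero (Finset.mem_range.mpr hm) (by simp)
        rw [h0, mul_zero, zero_mul, Nat.cast_zero, mul_zero]
  exact Filter.Tendsto.congr (fun a => (key a).symm) tendsto_const_nhds
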